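/- arXiv:1005.4561 — 8 statements merged into one kernel-verified Lean document; each statement's English description precedes it below -/
import Mathlib

section
/- Let X and Y be Banach spaces and for each natural number k let θ_k : X → Y be a (not necessarily bounded) linear map. Suppose that for every sequence (x_k) in X converging to 0 in norm, the sequence (θ_k(x_k)) converges to 0 in norm in Y. Then there exists n₀ ∈ ℕ such that each θ_n with n ≥ n₀ is bounded and sup_{n ≥ n₀} ‖θ_n‖ < ∞. -/
/-!
If no ball around `0` were mapped into the unit ball by all `θ n` with `n` large, there would be
indices `n_k → ∞` and points `z_k` with `‖z_k‖ < 1 / (k + 1)` but `‖θ (n_k) z_k‖ ≥ 1`. The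
sequence equal to `z_k` at `n_k` and to `0` elsewhere tends to `0`, while its image does not.
So some ball of radius `δ` is mapped into the unit ball for all large `n`, and scaling gives
`‖θ n‖ ≤ 2 / δ`.
-/

open Filter Topology

theorem Filter.Tendsto.extend_strictMono {α : Type*} [TopologicalSpace α] {a : α} {z : ℕ → α}
    (hz : Tendsto z atTop (𝓝 a)) {φ : ℕ → ℕ} (hφ : StrictMono φ) :
    Tendsto (Function.extend φ z fun _ ↦ a) atTop (𝓝 a) := by
  rw [tendsto_nhds]
  intro s hs has
  obtain ⟨K, hK⟩ := eventually_atTop.1 (hz.eventually (hs.mem_nhds has))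
  filter_upwards [eventually_ge_atTop (φ K)] with m hm
  by_cases hrange : ∃ k, φ k = m
  · obtain ⟨k, rfl⟩ := hrange
    rw [Set.mem_preimage, hφ.injective.extend_apply]
    exact hK k (hφ.le_iff_le.1 hm)
  · rwa [Set.mem_preimage, Function.extend_apply' _ _ _ hrange]

theorem exists_eventually_dist_lt_of_forall_tendsto {X Y : Type*} [PseudoMetricSpace X]
    [PseudoMetricSpace Y] {f : ℕ → X → Y} {a : X} {b : Y}
    (h : ∀ x : ℕ → X, Tendsto x atTop (𝓝 a) → Tendsto (fun n ↦ f n (x n)) atTop (𝓝 b))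
    {ε : ℝ} (hε : 0 < ε) :
    ∃ δ > 0, ∀ᶠ n in atTop, ∀ z, dist z a < δ → dist (f n z) b < ε := by
  by_contra! hbad
  have hfreq (k : ℕ) : ∃ᶠ n in atTop, ∃ z, dist z a < 1 / (k + 1) ∧ ε ≤ dist (f n z) b := by
    simpa [not_eventually] using hbad (1 / (k + 1)) Nat.one_div_pos_of_nat
  obtain ⟨φ, hφ, hφz⟩ := extraction_forall_of_frequently hfreq
  choose z hz_near hz_far using hφz
  have hz : Tendsto z atTop (𝓝 a) :=
    tendsto_iff_dist_tendsto_zero.2 <| squeeze_zero (fun _ ↦ dist_nonneg)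
      (fun k ↦ (hz_near k).le) tendsto_one_div_add_atTop_nhds_zero_nat
  have hlim := (h _ (hz.extend_strictMono hφ)).comp hφ.tendsto_atTop
  have hfar (k : ℕ) : ε ≤ dist (f (φ k) (Function.extend φ z (fun _ ↦ a) (φ k))) b := by
    rw [hφ.injective.extend_apply]
    exact hz_far k
  obtain ⟨k, hk⟩ := ((tendsto_iff_dist_tendsto_zero.1 hlim).eventually (gt_mem_nhds hε)).exists
  exact (hfar k).not_gt hk

theorem stmt_0_general
    {X Y : Type*} [NormedAddCommGroup X] [NormedSpace ℂ X]
    [NormedAddCommGroup Y] [NormedSpace ℂ Y]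
    (θ : ℕ → (X →ₗ[ℂ] Y))
    (h : ∀ x : ℕ → X, Tendsto x atTop (𝓝 0) →
      Tendsto (fun k => θ k (x k)) atTop (𝓝 0)) :
    ∃ n₀ : ℕ, ∃ C : ℝ, ∀ n ≥ n₀, ∀ x : X, ‖θ n x‖ ≤ C * ‖x‖ := by
  obtain ⟨δ, hδ, hθ⟩ := exists_eventually_dist_lt_of_forall_tendsto h one_pos
  obtain ⟨n₀, hn₀⟩ := eventually_atTop.1 hθ
  refine ⟨n₀, 2 / δ, fun n hn ↦
    (θ n).bound_of_shell hδ (c := (2 : ℂ)) (by norm_num) fun x hx_ge hx_lt ↦ ?_⟩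
  rw [Complex.norm_two] at hx_ge
  have hx : ‖θ n x‖ < 1 := by simpa using hn₀ n hn x (by simpa using hx_lt)
  calc ‖θ n x‖ ≤ 1 := hx.le
    _ = 2 / δ * (δ / 2) := by field_simp
    _ ≤ 2 / δ * ‖x‖ := by gcongr

theorem stmt_0
    {X Y : Type*} [NormedAddCommGroup X] [NormedSpace ℂ X] [CompleteSpace X]
    [NormedAddCommGroup Y] [NormedSpace ℂ Y] [CompleteSpace Y]
    (θ : ℕ → (X →ₗ[ℂ] Y))
    (h : ∀ x : ℕ → X, Tendsto x atTop (𝓝 0) →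
      Tendsto (fun k => θ k (x k)) atTop (𝓝 0)) :
    ∃ n₀ : ℕ, ∃ C : ℝ, ∀ n ≥ n₀, ∀ x : X, ‖θ n x‖ ≤ C * ‖x‖ :=
  stmt_0_general θ h
end

section
/- Let Ω be a countable compact Hausdorff topological space, and let E be a Banach space which is a unital Banach module over C(Ω, ℂ) (i.e., ‖e·φ‖ ≤ ‖e‖·‖φ‖ and e·1 = e). For ω ∈ Ω, let K_ω^E denote the closed linear span of { e·φ : e ∈ E, φ ∈ C(Ω,ℂ), φ(ω) = 0 }. Then ⋂_{ω ∈ Ω} K_ω^E = {0}. -/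
/-! The hull `F` of the annihilator of `e` (the common zero set of all `φ` with `φ • e = 0`) is
closed, and since the annihilator is a closed ideal of `C(Ω)`, every function vanishing on `F`
annihilates `e`. If `F` is empty this gives `1 • e = 0`. Otherwise, by Baire's theorem, the
countable compact set `F` has an isolated point `ω`. Since `e ∈ K_ω^E`, `‖χ • e‖ ≤ ε ‖χ‖` for every
`χ` supported in a small enough neighbourhood of `ω`. Take `ψ` with `ψ ω = 1` vanishing on
`F \ {ω}`; for a bump `θ` at `ω` with small support, `ψ - θ ψ` vanishes on `F`, so
`‖ψ • e‖ = ‖θ ψ • e‖ ≤ ε ‖ψ‖`. Hence `ψ` annihilates `e`, contradicting `ω ∈ F`. -/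

open Set Filter Topology ContinuousMap Function

theorem exists_isOpen_singleton_of_countable {X : Type*} [TopologicalSpace X] [BaireSpace X]
    [T1Space X] [Countable X] [Nonempty X] : ∃ x : X, IsOpen ({x} : Set X) := by
  obtain ⟨x, hx⟩ := nonempty_interior_of_iUnion_of_closed (fun x : X ↦ isClosed_singleton)
    (iUnion_of_singleton X)
  exact ⟨x, hx.subset_singleton_iff.1 interior_subset ▸ isOpen_interior⟩

theorem IsClosed.exists_isolated_of_countable {X : Type*} [TopologicalSpace X] [CompactSpace X]
    [T2Space X] [Countable X] {F : Set X} (hF : IsClosed F) (hne : F.Nonempty) :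
    ∃ x ∈ F, ∃ U ∈ 𝓝 x, U ∩ F ⊆ {x} := by
  have : CompactSpace F := isCompact_iff_compactSpace.1 hF.isCompact
  have : Nonempty F := hne.to_subtype
  obtain ⟨⟨x, hxF⟩, hx⟩ := exists_isOpen_singleton_of_countable (X := F)
  obtain ⟨U, hU, hUx⟩ := isOpen_induced_iff.1 hx
  refine ⟨x, hxF, U, hU.mem_nhds ?_, fun y ⟨hyU, hyF⟩ ↦ ?_⟩
  · exact (hUx ▸ rfl : (⟨x, hxF⟩ : F) ∈ Subtype.val ⁻¹' U)
  · exact congrArg Subtype.val (hUx ▸ hyU : (⟨y, hyF⟩ : F) ∈ ({⟨x, hxF⟩} : Set F))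

theorem exists_norm_le_one_apply_eq_one_support_subset {X : Type*} [TopologicalSpace X]
    [CompactSpace X] [T2Space X] {x : X} {N : Set X} (hN : N ∈ 𝓝 x) :
    ∃ θ : C(X, ℂ), ‖θ‖ ≤ 1 ∧ θ x = 1 ∧ support θ ⊆ N := by
  obtain ⟨f, hf0, hf1, hf01⟩ := exists_continuous_zero_one_of_isClosed
    isOpen_interior.isClosed_compl isClosed_singleton
    (disjoint_singleton_right.2 (not_not.2 (mem_interior_iff_mem_nhds.2 hN)))
  refine ⟨(Complex.ofRealCLM : C(ℝ, ℂ)).comp f, (norm_le _ zero_le_one).2 fun y ↦ ?_, ?_,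
    fun y hy ↦ ?_⟩
  · simpa [abs_of_nonneg (hf01 y).1] using (hf01 y).2
  · simp [hf1 rfl]
  · by_contra hyN
    exact hy (by simp [hf0 (fun h ↦ hyN (interior_subset h))])

section Annihilator

variable {Ω : Type*} [TopologicalSpace Ω] [CompactSpace Ω]
  {E : Type*} [NormedAddCommGroup E] [Module C(Ω, ℂ) E]

theorem isClosed_torsionOf (hnorm : ∀ (φ : C(Ω, ℂ)) (e : E), ‖φ • e‖ ≤ ‖φ‖ * ‖e‖) (e : E) :
    IsClosed (Ideal.torsionOf C(Ω, ℂ) E e : Set C(Ω, ℂ)) := by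
  have : Continuous fun φ : C(Ω, ℂ) ↦ φ • e :=
    AddMonoidHomClass.continuous_of_bound (LinearMap.toSpanSingleton C(Ω, ℂ) E e) ‖e‖
      fun φ ↦ by rw [mul_comm]; exact hnorm φ e
  exact isClosed_singleton.preimage this

theorem smul_eq_zero_of_forall_notMem_setOfIdeal [T2Space Ω]
    (hnorm : ∀ (φ : C(Ω, ℂ)) (e : E), ‖φ • e‖ ≤ ‖φ‖ * ‖e‖)
    {e : E} {χ : C(Ω, ℂ)} (hχ : ∀ x ∉ setOfIdeal (Ideal.torsionOf C(Ω, ℂ) E e), χ x = 0) :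
    χ • e = 0 := by
  have : χ ∈ idealOfSet ℂ (setOfIdeal (Ideal.torsionOf C(Ω, ℂ) E e)) := mem_idealOfSet.2 hχ
  rwa [idealOfSet_ofIdeal_isClosed (isClosed_torsionOf hnorm e), Ideal.mem_torsionOf_iff] at this

end Annihilator

section LocallyNegligible

variable {Ω : Type*} [TopologicalSpace Ω] [CompactSpace Ω]
  {E : Type*} [NormedAddCommGroup E] [NormedSpace ℂ E]
  [Module C(Ω, ℂ) E] [IsScalarTower ℂ C(Ω, ℂ) E]

variable (E) in
def locallyNegligibleAt (ω : Ω) : Submodule ℂ E where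
  carrier := {x | ∀ ε > 0, ∃ N ∈ 𝓝 ω, ∀ χ : C(Ω, ℂ), support χ ⊆ N → ‖χ • x‖ ≤ ε * ‖χ‖}
  zero_mem' _ hε := ⟨univ, univ_mem, fun χ _ ↦ by simp only [smul_zero, norm_zero]; positivity⟩
  add_mem' {x y} hx hy ε hε := by
    obtain ⟨N₁, hN₁, hx⟩ := hx (ε / 2) (half_pos hε)
    obtain ⟨N₂, hN₂, hy⟩ := hy (ε / 2) (half_pos hε)
    refine ⟨N₁ ∩ N₂, inter_mem hN₁ hN₂, fun χ hχ ↦ ?_⟩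
    calc ‖χ • (x + y)‖ ≤ ‖χ • x‖ + ‖χ • y‖ := by rw [smul_add]; exact norm_add_le _ _
      _ ≤ ε / 2 * ‖χ‖ + ε / 2 * ‖χ‖ :=
        add_le_add (hx χ (hχ.trans inter_subset_left)) (hy χ (hχ.trans inter_subset_right))
      _ = ε * ‖χ‖ := by ring
  smul_mem' c x hx ε hε := by
    obtain ⟨N, hN, hx⟩ := hx (ε / (‖c‖ + 1)) (by positivity)
    refine ⟨N, hN, fun χ hχ ↦ ?_⟩
    calc ‖χ • c • x‖ = ‖c‖ * ‖χ • x‖ := by rw [smul_comm, norm_smul]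
      _ ≤ ‖c‖ * (ε / (‖c‖ + 1) * ‖χ‖) := by gcongr; exact hx χ hχ
      _ ≤ ε * ‖χ‖ := by
        rw [← mul_assoc, mul_div_assoc']
        gcongr
        rw [div_le_iff₀ (by positivity)]
        nlinarith [norm_nonneg c]

theorem isClosed_locallyNegligibleAt
    (hnorm : ∀ (φ : C(Ω, ℂ)) (e : E), ‖φ • e‖ ≤ ‖φ‖ * ‖e‖) (ω : Ω) :
    IsClosed (locallyNegligibleAt E ω : Set E) := by
  refine isClosed_of_closure_subset fun x hx ε hε ↦ ?_
  obtain ⟨y, hy, hxy⟩ := Metric.mem_closure_iff.1 hx (ε / 2) (half_pos hε)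
  obtain ⟨N, hN, hy⟩ := hy (ε / 2) (half_pos hε)
  refine ⟨N, hN, fun χ hχ ↦ ?_⟩
  calc ‖χ • x‖ ≤ ‖χ • (x - y)‖ + ‖χ • y‖ := by
        rw [smul_sub]; exact norm_le_norm_sub_add _ _
    _ ≤ ‖χ‖ * (ε / 2) + ε / 2 * ‖χ‖ := by
        gcongr
        · exact (hnorm χ _).trans (by gcongr; rw [← dist_eq_norm]; exact hxy.le)
        · exact hy χ hχ
    _ = ε * ‖χ‖ := by ring

theorem smul_mem_locallyNegligibleAt
    (hnorm : ∀ (φ : C(Ω, ℂ)) (e : E), ‖φ • e‖ ≤ ‖φ‖ * ‖e‖)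
    {ω : Ω} {φ : C(Ω, ℂ)} (hφ : φ ω = 0) (e : E) :
    φ • e ∈ locallyNegligibleAt E ω := by
  intro ε hε
  set δ := ε / (‖e‖ + 1)
  have hδ : 0 < δ := by positivity
  refine ⟨{y | ‖φ y‖ < δ}, φ.continuous.norm.continuousAt.eventually_lt continuousAt_const
    (by simpa [hφ] using hδ), fun χ hχ ↦ ?_⟩
  have hχφ : ‖χ * φ‖ ≤ ‖χ‖ * δ := by
    refine (norm_le _ (by positivity)).2 fun y ↦ ?_
    by_cases hy : χ y = 0
    · simp [hy]; positivity
    · rw [mul_apply, norm_mul]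
      exact mul_le_mul (χ.norm_coe_le_norm y) (hχ hy).le (norm_nonneg _) (norm_nonneg _)
  calc ‖χ • φ • e‖ = ‖(χ * φ) • e‖ := by rw [mul_smul]
    _ ≤ ‖χ‖ * δ * ‖e‖ := (hnorm _ _).trans (by gcongr)
    _ ≤ ε * ‖χ‖ := by
        rw [mul_assoc, mul_comm]
        gcongr
        rw [div_mul_eq_mul_div, div_le_iff₀ (by positivity)]
        nlinarith [norm_nonneg e]

theorem closure_span_subset_locallyNegligibleAt
    (hnorm : ∀ (φ : C(Ω, ℂ)) (e : E), ‖φ • e‖ ≤ ‖φ‖ * ‖e‖) (ω : Ω) :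
    closure (Submodule.span ℂ {x : E | ∃ (φ : C(Ω, ℂ)) (e : E), φ ω = 0 ∧ x = φ • e} : Set E) ⊆
      locallyNegligibleAt E ω :=
  closure_minimal (Submodule.span_le.2 fun _ ⟨_, e, hφ, hx⟩ ↦
    hx ▸ smul_mem_locallyNegligibleAt hnorm hφ e) (isClosed_locallyNegligibleAt hnorm ω)

theorem smul_eq_zero_of_mem_locallyNegligibleAt [T2Space Ω]
    (hnorm : ∀ (φ : C(Ω, ℂ)) (e : E), ‖φ • e‖ ≤ ‖φ‖ * ‖e‖) {ω : Ω} {e : E}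
    (he : e ∈ locallyNegligibleAt E ω) {ψ : C(Ω, ℂ)}
    (hψ : ∀ x ∉ setOfIdeal (Ideal.torsionOf C(Ω, ℂ) E e), x ≠ ω → ψ x = 0) : ψ • e = 0 := by
  have hsmall : ∀ ε > 0, ‖ψ • e‖ ≤ ε * ‖ψ‖ := by
    intro ε hε
    obtain ⟨N, hN, he⟩ := he ε hε
    obtain ⟨θ, hθ1, hθω, hθN⟩ := exists_norm_le_one_apply_eq_one_support_subset hN
    have hsplit : ψ • e = (θ * ψ) • e := by
      rw [← sub_eq_zero, ← sub_smul]
      refine smul_eq_zero_of_forall_notMem_setOfIdeal hnorm fun x hx ↦ ?_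
      rcases eq_or_ne x ω with rfl | hxω
      · simp [hθω]
      · simp [hψ x hx hxω]
    calc ‖ψ • e‖ = ‖(θ * ψ) • e‖ := by rw [hsplit]
      _ ≤ ε * ‖θ * ψ‖ := he _ ((support_mul_subset_left _ _).trans hθN)
      _ ≤ ε * ‖ψ‖ := by
          gcongr
          exact (norm_mul_le θ ψ).trans (mul_le_of_le_one_left (norm_nonneg ψ) hθ1)
  have : ‖ψ • e‖ ≤ 0 * ‖ψ‖ := ge_of_tendsto
    ((continuous_mul_const ‖ψ‖).tendsto 0 |>.mono_left nhdsWithin_le_nhds)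
    (eventually_nhdsWithin_of_forall (s := Ioi 0) hsmall)
  simpa using this

end LocallyNegligible

theorem stmt_3_general
    {Ω : Type*} [TopologicalSpace Ω] [CompactSpace Ω] [T2Space Ω] [Countable Ω]
    {E : Type*} [NormedAddCommGroup E] [NormedSpace ℂ E]
    [Module C(Ω, ℂ) E] [IsScalarTower ℂ C(Ω, ℂ) E]
    (hnorm : ∀ (φ : C(Ω, ℂ)) (e : E), ‖φ • e‖ ≤ ‖φ‖ * ‖e‖)
    (e : E)
    (he : ∀ ω : Ω, e ∈ closure (Submodule.span ℂ
      {x : E | ∃ (φ : C(Ω, ℂ)) (e' : E), φ ω = 0 ∧ x = φ • e'} : Set E)) :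
    e = 0 := by
  set F := (setOfIdeal (Ideal.torsionOf C(Ω, ℂ) E e))ᶜ
  rcases F.eq_empty_or_nonempty with hF | hF
  · rw [← one_smul C(Ω, ℂ) e]
    exact smul_eq_zero_of_forall_notMem_setOfIdeal hnorm fun x hx ↦
      (eq_empty_iff_forall_notMem.1 hF x hx).elim
  · obtain ⟨ω, hωF, U, hU, hUF⟩ :=
      (setOfIdeal_open _).isClosed_compl.exists_isolated_of_countable hF
    obtain ⟨ψ, -, hψω, hψU⟩ := exists_norm_le_one_apply_eq_one_support_subset hU
    have hψe : ψ • e = 0 := smul_eq_zero_of_mem_locallyNegligibleAt hnorm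
      (closure_span_subset_locallyNegligibleAt hnorm ω (he ω)) fun x hxF hxω ↦
        notMem_support.1 fun hxU ↦ hxω (hUF ⟨hψU hxU, hxF⟩)
    have hψω' : ψ ω = 0 := notMem_setOfIdeal.1 hωF ((Ideal.mem_torsionOf_iff e ψ).2 hψe)
    exact absurd (hψω.symm.trans hψω') one_ne_zero

theorem stmt_3
    {Ω : Type*} [TopologicalSpace Ω] [CompactSpace Ω] [T2Space Ω] [Countable Ω]
    {E : Type*} [NormedAddCommGroup E] [NormedSpace ℂ E] [CompleteSpace E]
    [Module C(Ω, ℂ) E] [IsScalarTower ℂ C(Ω, ℂ) E]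
    (hnorm : ∀ (φ : C(Ω, ℂ)) (e : E), ‖φ • e‖ ≤ ‖φ‖ * ‖e‖)
    (e : E)
    (he : ∀ ω : Ω, e ∈ closure (Submodule.span ℂ
      {x : E | ∃ (φ : C(Ω, ℂ)) (e' : E), φ ω = 0 ∧ x = φ • e'} : Set E)) :
    e = 0 :=
  stmt_3_general hnorm e he
end

section
/- Let Ω and Δ be locally compact Hausdorff spaces, σ : Δ → Ω a map (not assumed continuous), and Φ : C₀(Ω) → C_b(Δ) a ℂ-linear map satisfying Φ(λψ) = Φ(λ)·(ψ ∘ σ) for all λ, ψ ∈ C₀(Ω). If for every ν ∈ Δ there exists λ ∈ C₀(Ω) with Φ(λ)(ν) ≠ 0, then σ is continuous. -/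
open ZeroAtInfty BoundedContinuousFunction

theorem stmt_4
    {Ω Δ : Type*} [TopologicalSpace Ω] [LocallyCompactSpace Ω] [T2Space Ω]
    [TopologicalSpace Δ] [LocallyCompactSpace Δ] [T2Space Δ]
    (σ : Δ → Ω) (Φ : C₀(Ω, ℂ) →ₗ[ℂ] (Δ →ᵇ ℂ))
    (hmul : ∀ (lam ψ : C₀(Ω, ℂ)) (ν : Δ), Φ (lam * ψ) ν = Φ lam ν * ψ (σ ν))
    (hfull : ∀ ν : Δ, ∃ lam : C₀(Ω, ℂ), Φ lam ν ≠ 0) :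
    Continuous σ := by
  rw [continuous_iff_continuousAt]
  intro ν₀
  rw [ContinuousAt, _root_.tendsto_nhds]
  intro U hU hmem
  obtain ⟨lam, hlam⟩ := hfull ν₀
  obtain ⟨f, hf1, hf0, hfc, -⟩ :=
    exists_continuous_one_zero_of_isCompact (isCompact_singleton (x := σ ν₀))
      hU.isClosed_compl (by simpa using hmem)
  have hcc : HasCompactSupport (fun x => (f x : ℂ)) := by
    exact HasCompactSupport.comp_left (g := (Complex.ofReal : ℝ → ℂ)) hfc Complex.ofReal_zero
  set ψ : C₀(Ω, ℂ) :=
    ⟨⟨fun x => (f x : ℂ), Complex.continuous_ofReal.comp f.continuous⟩,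
      hcc.is_zero_at_infty⟩ with hψ
  have hψσ : ψ (σ ν₀) = 1 := by
    have := hf1 (Set.mem_singleton (σ ν₀))
    simp only [hψ, ZeroAtInftyContinuousMap.coe_mk, ContinuousMap.coe_mk]
    rw [show f (σ ν₀) = 1 from this]
    norm_num
  have hg : Φ (lam * ψ) ν₀ ≠ 0 := by
    rw [hmul, hψσ, mul_one]; exact hlam
  have hopen : IsOpen {ν | Φ (lam * ψ) ν ≠ 0} :=
    isOpen_ne.preimage (Φ (lam * ψ)).continuous
  filter_upwards [hopen.mem_nhds hg] with ν hν
  by_contra hnot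
  have : f (σ ν) = 0 := hf0 hnot
  apply hν
  rw [hmul]
  simp [hψ, this]
end

section
/- Let Ω be a locally compact Hausdorff space and T : C₀(Ω) → C₀(Ω) a ℂ-linear map (not assumed bounded) which is local, i.e., for all f, g ∈ C₀(Ω), f·g = 0 implies T(f)·g = 0. Then T is C₀(Ω)-linear: T(f·φ) = T(f)·φ for all f, φ ∈ C₀(Ω). -/
/-!
Locality lets one multiply by an Urysohn bump, so `T f x` only depends on the germ of `f` at `x`.
The heart of the proof is that `h ω = 0` forces `T h ω = 0`. Otherwise there are points `x n`
near `ω` with `‖T h (x n)‖ ≥ ‖T h ω‖ / 2` and `‖h (x n)‖` decreasing geometrically; a series of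
cut-offs of `h` glues to a single `K ∈ C₀` equal to `(n + 1) • h` near each `x n`, so
`‖T K (x n)‖ ≥ (n + 1) ‖T h ω‖ / 2`, which is impossible for the bounded function `T K`.
Applied to `f * φ - φ x • f`, this gives `T (f * φ) x = T f x * φ x`.
-/

open ZeroAtInfty

open Filter Topology

theorem exists_seq_four_mul_lt {α : Type*} {P : α → Prop} {p : α → ℝ}
    (h : ∀ ε > 0, ∃ a, P a ∧ 0 < p a ∧ p a < ε) :
    ∃ x : ℕ → α, (∀ n, P (x n)) ∧ ∀ n, 4 * p (x (n + 1)) < p (x n) := by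
  obtain ⟨x, hxP, hx⟩ := exists_seq_of_forall_finset_exists (fun a => P a ∧ 0 < p a)
    (fun a b => 4 * p b < p a) fun s hs => by
      have hsmall : ∀ᶠ ε in 𝓝[>] (0 : ℝ), ∀ a ∈ s, 4 * ε < p a := by
        refine s.eventually_all.2 fun a ha => nhdsWithin_le_nhds ?_
        exact (continuous_const_mul 4).tendsto' 0 0 (mul_zero 4) |>.eventually
          (gt_mem_nhds (hs a ha).2)
      obtain ⟨ε, hεs, hε⟩ := (hsmall.and self_mem_nhdsWithin).exists
      obtain ⟨b, hbP, hb0, hbε⟩ := h ε hε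
      exact ⟨b, ⟨hbP, hb0⟩, fun a ha => by linarith [hεs a ha]⟩
  exact ⟨x, fun n => (hxP n).1, fun n => hx n (n + 1) n.lt_succ_self⟩

namespace ZeroAtInftyContinuousMap

variable {Ω 𝕜 : Type*} [TopologicalSpace Ω] [RCLike 𝕜]

theorem norm_apply_le_norm (f : C₀(Ω, 𝕜)) (x : Ω) : ‖f x‖ ≤ ‖f‖ := by
  rw [← norm_toBCF_eq_norm]
  exact f.toBCF.norm_coe_le_norm x

theorem tsum_apply {ι : Type*} {f : ι → C₀(Ω, 𝕜)} (hf : Summable f) (x : Ω) :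
    (∑' i, f i) x = ∑' i, f i x :=
  (LinearMap.mkContinuous
    (⟨⟨fun g => g x, fun _ _ => rfl⟩, fun _ _ => rfl⟩ : C₀(Ω, 𝕜) →ₗ[𝕜] 𝕜)
    1 fun g => by simpa using norm_apply_le_norm g x).map_tsum hf

theorem exists_apply_eq_one_of_mem_nhds [LocallyCompactSpace Ω] [T2Space Ω] {x : Ω} {O : Set Ω}
    (hO : O ∈ 𝓝 x) : ∃ g : C₀(Ω, 𝕜), g x = 1 ∧ ∀ y ∉ O, g y = 0 := by
  obtain ⟨b, hb1, hb0, hbc, -⟩ := exists_continuous_one_zero_of_isCompact isCompact_singleton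
    isOpen_interior.isClosed_compl (Set.disjoint_compl_right_iff_subset.2 <|
      Set.singleton_subset_iff.2 (mem_interior_iff_mem_nhds.2 hO))
  have hbc' : HasCompactSupport fun y => (b y : 𝕜) := hbc.comp_left RCLike.ofReal_zero
  refine ⟨⟨⟨fun y => (b y : 𝕜), by fun_prop⟩, hbc'.is_zero_at_infty⟩, ?_, fun y hy => ?_⟩
  · simp [hb1 rfl]
  · simp [hb0 (fun h => hy (interior_subset h))]

noncomputable def cutoff (h : C₀(Ω, 𝕜)) (r : ℝ) : C₀(Ω, 𝕜) where
  toFun x := (max 0 (min 1 (2 - ‖h x‖ / r)) : ℝ) • h x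
  continuous_toFun := by fun_prop
  zero_at_infty' := by
    refine squeeze_zero_norm (fun x => ?_) (by simpa using h.zero_at_infty'.norm)
    rw [norm_smul, Real.norm_of_nonneg (le_max_left _ _)]
    exact mul_le_of_le_one_left (norm_nonneg _) (max_le zero_le_one (min_le_left _ _))

theorem cutoff_apply (h : C₀(Ω, 𝕜)) (r : ℝ) (x : Ω) :
    cutoff h r x = (max 0 (min 1 (2 - ‖h x‖ / r)) : ℝ) • h x :=
  rfl

theorem cutoff_apply_of_norm_le {h : C₀(Ω, 𝕜)} {r : ℝ} (hr : 0 < r) {x : Ω} (hx : ‖h x‖ ≤ r) :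
    cutoff h r x = h x := by
  have : 1 ≤ 2 - ‖h x‖ / r := by linarith [(div_le_one hr).2 hx]
  rw [cutoff_apply, min_eq_left this, max_eq_right zero_le_one, one_smul]

theorem cutoff_apply_of_le_norm {h : C₀(Ω, 𝕜)} {r : ℝ} (hr : 0 < r) {x : Ω}
    (hx : 2 * r ≤ ‖h x‖) : cutoff h r x = 0 := by
  have : 2 - ‖h x‖ / r ≤ 0 := by linarith [(le_div_iff₀ hr).2 hx]
  rw [cutoff_apply, min_eq_right (this.trans zero_le_one), max_eq_left this, zero_smul]

theorem norm_cutoff_le (h : C₀(Ω, 𝕜)) {r : ℝ} (hr : 0 < r) : ‖cutoff h r‖ ≤ 2 * r := by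
  rw [← norm_toBCF_eq_norm]
  refine (BoundedContinuousFunction.norm_le (by positivity)).2 fun x => ?_
  change ‖cutoff h r x‖ ≤ 2 * r
  rcases le_or_gt (2 * r) ‖h x‖ with hx | hx
  · rw [cutoff_apply_of_le_norm hr hx, norm_zero]
    positivity
  · rw [cutoff_apply, norm_smul, Real.norm_of_nonneg (le_max_left _ _)]
    exact (mul_le_of_le_one_left (norm_nonneg _)
      (max_le zero_le_one (min_le_left _ _))).trans hx.le

theorem exists_eventuallyEq_nsmul (h : C₀(Ω, 𝕜)) {x : ℕ → Ω}
    (hx : ∀ n, 4 * ‖h (x (n + 1))‖ < ‖h (x n)‖) :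
    ∃ K : C₀(Ω, 𝕜), ∀ n, K =ᶠ[𝓝 (x n)] ((n + 1) • h : C₀(Ω, 𝕜)) := by
  have hpos : ∀ n, 0 < ‖h (x n)‖ := fun n => by linarith [hx n, norm_nonneg (h (x (n + 1)))]
  have hanti : Antitone fun n => ‖h (x n)‖ :=
    antitone_nat_of_succ_le fun n => by linarith [hx n, hpos (n + 1)]
  have hQ : Summable fun n => cutoff h (2 * ‖h (x n)‖) := by
    refine Summable.of_norm_bounded (g := fun n => 4 * ‖h (x n)‖) ?_ fun n => ?_
    · refine (summable_of_ratio_norm_eventually_le (f := fun n => ‖h (x n)‖) (r := 4⁻¹)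
        (by norm_num) (Eventually.of_forall fun n => ?_)).mul_left 4
      simp only [norm_norm]
      linarith [hx n]
    · exact (norm_cutoff_le h (by linarith [hpos n])).trans_eq (by ring)
  -- Near `x n` the first `n + 1` terms of the series equal `h` and the others vanish.
  refine ⟨∑' n, cutoff h (2 * ‖h (x n)‖), fun n => ?_⟩
  have hO : {y | 4 * ‖h (x (n + 1))‖ < ‖h y‖ ∧ ‖h y‖ < 2 * ‖h (x n)‖} ∈ 𝓝 (x n) :=
    (isOpen_lt continuous_const h.continuous.norm |>.inter
      (isOpen_lt h.continuous.norm continuous_const)).mem_nhds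
      ⟨hx n, lt_two_mul_self (hpos n)⟩
  filter_upwards [hO] with y ⟨hlo, hhi⟩
  rw [tsum_apply hQ, tsum_eq_sum (s := Finset.range (n + 1))]
  · rw [Finset.sum_congr rfl fun l hl => cutoff_apply_of_norm_le (by linarith [hpos l])
      (hhi.le.trans (by linarith [hanti (Finset.mem_range_succ_iff.1 hl)]))]
    simp
  · intro l hl
    refine cutoff_apply_of_le_norm (by linarith [hpos l]) ?_
    linarith [hanti (show n + 1 ≤ l by simpa using hl)]

def IsLocal (T : C₀(Ω, 𝕜) →ₗ[𝕜] C₀(Ω, 𝕜)) : Prop :=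
  ∀ f g : C₀(Ω, 𝕜), f * g = 0 → T f * g = 0

variable [LocallyCompactSpace Ω] [T2Space Ω] {T : C₀(Ω, 𝕜) →ₗ[𝕜] C₀(Ω, 𝕜)}

theorem IsLocal.apply_eq_of_eventuallyEq (hT : IsLocal T) {f g : C₀(Ω, 𝕜)} {x : Ω}
    (hfg : f =ᶠ[𝓝 x] g) : T f x = T g x := by
  obtain ⟨b, hb1, hb0⟩ := exists_apply_eq_one_of_mem_nhds (𝕜 := 𝕜) hfg
  have hvanish : (f - g) * b = 0 := by
    ext y
    by_cases hy : f y = g y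
    · simp [hy]
    · simp [hb0 y hy]
  simpa [hb1, sub_eq_zero] using congr($(hT _ _ hvanish) x)

theorem IsLocal.apply_eq_zero_of_apply_eq_zero (hT : IsLocal T) {h : C₀(Ω, 𝕜)} {ω : Ω}
    (hω : h ω = 0) : T h ω = 0 := by
  by_contra hc
  have hc_pos : 0 < ‖T h ω‖ := norm_pos_iff.2 hc
  have hnear : ∀ ε > 0, ∃ y, ‖T h ω‖ / 2 < ‖T h y‖ ∧ 0 < ‖h y‖ ∧ ‖h y‖ < ε := by
    intro ε hε
    have hfreq : ∃ᶠ y in 𝓝 ω, h y ≠ 0 :=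
      not_eventually.1 fun h0 => hc (by simpa using hT.apply_eq_of_eventuallyEq (g := 0) h0)
    have hTh : ∀ᶠ y in 𝓝 ω, ‖T h ω‖ / 2 < ‖T h y‖ :=
      (T h).continuous.norm.continuousAt.eventually (lt_mem_nhds (half_lt_self hc_pos))
    have hsmall : ∀ᶠ y in 𝓝 ω, ‖h y‖ < ε :=
      h.continuous.norm.continuousAt.eventually (gt_mem_nhds (by simpa [hω]))
    obtain ⟨y, hy0, hyT, hyε⟩ := (hfreq.and_eventually (hTh.and hsmall)).exists
    exact ⟨y, hyT, norm_pos_iff.2 hy0, hyε⟩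
  obtain ⟨x, hxT, hx⟩ := exists_seq_four_mul_lt hnear
  obtain ⟨K, hK⟩ := exists_eventuallyEq_nsmul h hx
  obtain ⟨n, hn⟩ := exists_nat_gt (‖T K‖ / (‖T h ω‖ / 2))
  have hTK : ((n : ℝ) + 1) * (‖T h ω‖ / 2) ≤ ‖T K‖ :=
    calc ((n : ℝ) + 1) * (‖T h ω‖ / 2) ≤ ((n : ℝ) + 1) * ‖T h (x n)‖ := by
          gcongr; exact (hxT n).le
      _ = ‖T K (x n)‖ := by
        rw [hT.apply_eq_of_eventuallyEq (hK n), map_nsmul, ← Nat.cast_smul_eq_nsmul 𝕜, coe_smul,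
          Pi.smul_apply, norm_smul, RCLike.norm_natCast, Nat.cast_succ]
      _ ≤ ‖T K‖ := norm_apply_le_norm _ _
  rw [div_lt_iff₀ (by positivity)] at hn
  linarith

end ZeroAtInftyContinuousMap

theorem stmt_5
    {Ω : Type*} [TopologicalSpace Ω] [LocallyCompactSpace Ω] [T2Space Ω]
    (T : C₀(Ω, ℂ) →ₗ[ℂ] C₀(Ω, ℂ))
    (hloc : ∀ f g : C₀(Ω, ℂ), f * g = 0 → T f * g = 0) :
    ∀ f φ : C₀(Ω, ℂ), T (f * φ) = T f * φ := by
  intro f φ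
  ext x
  have hkey := ZeroAtInftyContinuousMap.IsLocal.apply_eq_zero_of_apply_eq_zero (T := T) hloc
    (h := f * φ - φ x • f) (ω := x) (by simp [mul_comm])
  simpa [sub_eq_zero, mul_comm] using hkey
end

section
/- Let Ω be a locally compact Hausdorff space with no isolated points, and let X, Y be Banach spaces. Every C₀(Ω)-module map θ : C₀(Ω, X) → C₀(Ω, Y) (i.e., a ℂ-linear map with θ(f·φ) = θ(f)·φ for all f ∈ C₀(Ω,X), φ ∈ C₀(Ω)) is automatically bounded. -/
/-!
Suppose `θ` is unbounded, so that for every `C` the open set of points `ω` with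
`‖θ f ω‖ > C ‖f‖` for some `f` is nonempty. Since `θ (φ • f) ω = φ ω • θ f ω`, the value `θ f ω`
only depends on `f` near `ω`. A gliding hump shows that these sets cannot keep escaping every
compact subset of an open set `U`: otherwise one finds disjointly supported bumps `φₙ` and
functions `fₙ` of norm `≤ 2⁻ⁿ` with `‖θ fₙ (ωₙ)‖ > n`, and `f = ∑ φₙ • fₙ` satisfies
`θ f (ωₙ) = θ fₙ (ωₙ)`, so `θ f` would be unbounded. Taking `U = Ω` traps the sets in a compact
set, so their closures share a point `ω`. As `ω` is not isolated and the sets are open, `ω` is also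
a limit of points of them other than `ω`, so they are not trapped in any compact subset of
`U = Ω \ {ω}`.
-/

open ZeroAtInfty Filter Topology

/-- Pointwise multiplication of a `C₀` scalar function and a `C₀` vector-valued
function, i.e. the canonical `C₀(Ω, ℂ)`-module action on `C₀(Ω, X)`. -/
noncomputable def c0smul {Ω X : Type*} [TopologicalSpace Ω]
    [NormedAddCommGroup X] [NormedSpace ℂ X]
    (φ : C₀(Ω, ℂ)) (f : C₀(Ω, X)) : C₀(Ω, X) where
  toFun := fun ω => φ ω • f ω
  continuous_toFun := (φ.continuous).smul (f.continuous)
  zero_at_infty' := by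
    have := (φ.zero_at_infty').smul (f.zero_at_infty')
    simpa using this

open Set Function

namespace ZeroAtInftyContinuousMap

variable {α β : Type*} [TopologicalSpace α] [SeminormedAddCommGroup β]

theorem norm_apply_le (f : C₀(α, β)) (x : α) : ‖f x‖ ≤ ‖f‖ := by
  rw [← norm_toBCF_eq_norm]
  exact f.toBCF.norm_coe_le_norm x

theorem norm_le_of_forall_le {f : C₀(α, β)} {C : ℝ} (hC : 0 ≤ C) (h : ∀ x, ‖f x‖ ≤ C) :
    ‖f‖ ≤ C := by
  rw [← norm_toBCF_eq_norm]
  exact (BoundedContinuousFunction.norm_le hC).2 h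

end ZeroAtInftyContinuousMap

open ZeroAtInftyContinuousMap

section Topology

variable {Ω : Type*} [TopologicalSpace Ω]

theorem mem_closure_diff_singleton_of_isOpen {B : Set Ω} (hB : IsOpen B) {x : Ω}
    [(𝓝[≠] x).NeBot] (hx : x ∈ closure B) : x ∈ closure (B \ {x}) :=
  closure_minimal ((dense_compl_singleton x).open_subset_closure_inter hB) isClosed_closure hx

theorem exists_forall_mem_closure_of_antitone [T2Space Ω] {ι : Type*} [SemilatticeSup ι]
    {s : ι → Set Ω} (hs : Antitone s) (hne : ∀ i, (s i).Nonempty) {K : Set Ω}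
    (hK : IsCompact K) {i₀ : ι} (hsK : s i₀ ⊆ K) : ∃ x, ∀ i, x ∈ closure (s i) := by
  have : Nonempty ι := ⟨i₀⟩
  have hsub : ∀ i, closure (s (i ⊔ i₀)) ⊆ K := fun i =>
    hK.isClosed.closure_subset_iff.2 ((hs le_sup_right).trans hsK)
  obtain ⟨x, hx⟩ := IsCompact.nonempty_iInter_of_directed_nonempty_isCompact_isClosed
    (fun i => closure (s (i ⊔ i₀)))
    (fun i j => ⟨i ⊔ j, closure_mono (hs (sup_le_sup_right le_sup_left _)),
      closure_mono (hs (sup_le_sup_right le_sup_right _))⟩)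
    (fun i => (hne _).closure) (fun i => hK.of_isClosed_subset isClosed_closure (hsub i))
    (fun _ => isClosed_closure)
  exact ⟨x, fun i => closure_mono (hs le_sup_left) (mem_iInter.1 hx i)⟩

theorem exists_pairwise_disjoint_isCompact_seq {U : Set Ω} (P : ℕ → Set Ω → Prop)
    (h : ∀ n A, IsCompact A → A ⊆ U → ∃ M, IsCompact M ∧ M ⊆ U \ A ∧ P n M) :
    ∃ M : ℕ → Set Ω, Pairwise (Disjoint on M) ∧ ∀ n, P n (M n) := by
  choose! M hMc hMU hP using h
  let A : ℕ → Set Ω := fun n => Nat.rec ∅ (fun n A => A ∪ M n A) n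
  have hA : ∀ n, IsCompact (A n) ∧ A n ⊆ U := by
    intro n
    induction n with
    | zero => exact ⟨isCompact_empty, empty_subset U⟩
    | succ n ih =>
      exact ⟨ih.1.union (hMc n _ ih.1 ih.2),
        union_subset ih.2 ((hMU n _ ih.1 ih.2).trans sdiff_subset)⟩
  have hmono : Monotone A := monotone_nat_of_le_succ fun n => subset_union_left
  refine ⟨fun n => M n (A n), (pairwise_disjoint_on _).2 fun m n hmn => ?_,
    fun n => hP n _ (hA n).1 (hA n).2⟩
  have hmA : M m (A m) ⊆ A n := subset_union_right.trans (hmono hmn)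
  exact disjoint_sdiff_right.mono hmA (hMU n _ (hA n).1 (hA n).2)

theorem exists_c0_bump [LocallyCompactSpace Ω] [T2Space Ω] {W : Set Ω} (hW : IsOpen W) {ω : Ω}
    (hω : ω ∈ W) : ∃ (φ : C₀(Ω, ℂ)) (K : Set Ω), IsCompact K ∧ K ⊆ W ∧ support φ ⊆ K ∧
      φ ω = 1 ∧ ‖φ‖ ≤ 1 := by
  obtain ⟨K, hK, hωK, hKW⟩ := exists_compact_subset hW hω
  obtain ⟨f, hf1, hf0, hfc, hf01⟩ := exists_continuous_one_zero_of_isCompact isCompact_singleton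
    isOpen_interior.isClosed_compl (disjoint_compl_right_iff_subset.2 (singleton_subset_iff.2 hωK))
  refine ⟨⟨⟨fun x => (f x : ℂ), by fun_prop⟩,
    (hfc.comp_left Complex.ofReal_zero).is_zero_at_infty⟩, K, hK, hKW, fun x hx => ?_, ?_, ?_⟩
  · by_contra hxK
    exact hx (by simp [hf0 (fun h => hxK (interior_subset h))])
  · simp [hf1 (mem_singleton ω)]
  · refine norm_le_of_forall_le zero_le_one fun x => ?_
    simp only [coe_mk, Complex.norm_real, Real.norm_of_nonneg (hf01 x).1]
    exact (hf01 x).2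

end Topology

section c0smul

variable {Ω X : Type*} [TopologicalSpace Ω] [NormedAddCommGroup X] [NormedSpace ℂ X]

@[simp]
theorem c0smul_apply (φ : C₀(Ω, ℂ)) (f : C₀(Ω, X)) (x : Ω) : c0smul φ f x = φ x • f x := rfl

theorem norm_c0smul_le (φ : C₀(Ω, ℂ)) (f : C₀(Ω, X)) : ‖c0smul φ f‖ ≤ ‖φ‖ * ‖f‖ :=
  norm_le_of_forall_le (by positivity) fun x => by
    rw [c0smul_apply, norm_smul]
    exact mul_le_mul (norm_apply_le φ x) (norm_apply_le f x) (norm_nonneg _) (norm_nonneg _)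

theorem c0smul_c0smul_eq_zero_of_disjoint {φ ψ : C₀(Ω, ℂ)} (h : Disjoint (support φ) (support ψ))
    (f : C₀(Ω, X)) : c0smul φ (c0smul ψ f) = 0 := by
  ext x
  by_cases hx : φ x = 0
  · simp [hx]
  · simp [notMem_support.1 (disjoint_left.1 h (mem_support.2 hx))]

variable (X) in
noncomputable def c0smulCLM (φ : C₀(Ω, ℂ)) : C₀(Ω, X) →L[ℂ] C₀(Ω, X) :=
  LinearMap.mkContinuous
    { toFun := c0smul φ
      map_add' := fun f g => by ext x; simp [smul_add]
      map_smul' := fun c f => by ext x; simp [smul_comm (φ x) c] }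
    ‖φ‖ (norm_c0smul_le φ)

theorem c0smul_tsum (φ : C₀(Ω, ℂ)) {f : ℕ → C₀(Ω, X)} (hf : Summable f) :
    c0smul φ (∑' n, f n) = ∑' n, c0smul φ (f n) :=
  (c0smulCLM X φ).map_tsum hf

end c0smul

section ModuleMap

variable {Ω X Y : Type*} [TopologicalSpace Ω] [NormedAddCommGroup X] [NormedSpace ℂ X]
  [NormedAddCommGroup Y] [NormedSpace ℂ Y] (θ : C₀(Ω, X) →ₗ[ℂ] C₀(Ω, Y))

def IsC0ModuleMap : Prop := ∀ (f : C₀(Ω, X)) (φ : C₀(Ω, ℂ)), θ (c0smul φ f) = c0smul φ (θ f)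

def exceedSet (C : ℝ) : Set Ω := {ω | ∃ f : C₀(Ω, X), C * ‖f‖ < ‖θ f ω‖}

theorem isOpen_exceedSet (C : ℝ) : IsOpen (exceedSet θ C) := by
  simp only [exceedSet, ofPred_exists]
  exact isOpen_iUnion fun f => isOpen_lt continuous_const (θ f).continuous.norm

theorem exceedSet_antitone : Antitone (exceedSet θ) := fun _ _ hC _ ⟨f, hf⟩ =>
  ⟨f, lt_of_le_of_lt (mul_le_mul_of_nonneg_right hC (norm_nonneg f)) hf⟩

theorem exceedSet_nonempty (hunbdd : ∀ C : ℝ, ∃ f : C₀(Ω, X), C * ‖f‖ < ‖θ f‖) (C : ℝ) :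
    (exceedSet θ C).Nonempty := by
  obtain ⟨f, hf⟩ := hunbdd (max C 0)
  obtain ⟨ω, hω⟩ : ∃ ω, max C 0 * ‖f‖ < ‖θ f ω‖ := by
    by_contra! h
    exact hf.not_ge (norm_le_of_forall_le (by positivity) h)
  exact ⟨ω, exceedSet_antitone θ (le_max_left C 0) ⟨f, hω⟩⟩

theorem exists_norm_le_of_mem_exceedSet {C ε : ℝ} (hε : 0 < ε) {ω : Ω}
    (hω : ω ∈ exceedSet θ C) : ∃ f : C₀(Ω, X), ‖f‖ ≤ ε ∧ ε * C < ‖θ f ω‖ := by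
  obtain ⟨f, hf⟩ := hω
  have hf0 : 0 < ‖f‖ := norm_pos_iff.2 fun h => by simp [h] at hf
  have ht : 0 < ε / ‖f‖ := div_pos hε hf0
  refine ⟨((ε / ‖f‖ : ℝ) : ℂ) • f, ?_, ?_⟩
  · rw [norm_smul, Complex.norm_real, Real.norm_of_nonneg ht.le, div_mul_cancel₀ _ hf0.ne']
  · rw [map_smul, ZeroAtInftyContinuousMap.smul_apply, norm_smul, Complex.norm_real,
      Real.norm_of_nonneg ht.le]
    calc ε * C = ε / ‖f‖ * (C * ‖f‖) := by field_simp
      _ < ε / ‖f‖ * ‖θ f ω‖ := mul_lt_mul_of_pos_left hf ht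

variable {θ}

theorem IsC0ModuleMap.map_c0smul_apply (hθ : IsC0ModuleMap θ) {φ : C₀(Ω, ℂ)} {ω : Ω}
    (hφ : φ ω = 1) (f : C₀(Ω, X)) : θ (c0smul φ f) ω = θ f ω := by
  rw [hθ, c0smul_apply, hφ, one_smul]

theorem IsC0ModuleMap.apply_eq_of_c0smul_eq (hθ : IsC0ModuleMap θ) {φ : C₀(Ω, ℂ)} {ω : Ω}
    (hφ : φ ω = 1) {f g : C₀(Ω, X)} (h : c0smul φ f = c0smul φ g) : θ f ω = θ g ω := by
  rw [← hθ.map_c0smul_apply hφ f, h, hθ.map_c0smul_apply hφ g]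

theorem IsC0ModuleMap.exists_bound_of_pairwise_disjoint [CompleteSpace X] (hθ : IsC0ModuleMap θ)
    {φ : ℕ → C₀(Ω, ℂ)} {f : ℕ → C₀(Ω, X)} {ω : ℕ → Ω}
    (hdisj : Pairwise (Disjoint on fun n => support (φ n))) (hφω : ∀ n, φ n (ω n) = 1)
    (hφ : ∀ n, ‖φ n‖ ≤ 1) (hf : ∀ n, ‖f n‖ ≤ (1 / 2) ^ n) :
    ∃ B, ∀ n, ‖θ (f n) (ω n)‖ ≤ B := by
  set g := fun n => c0smul (φ n) (f n)
  have hg : Summable g := Summable.of_norm_bounded summable_geometric_two fun n =>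
    (norm_c0smul_le _ _).trans (by simpa using mul_le_mul (hφ n) (hf n) (norm_nonneg _) zero_le_one)
  refine ⟨‖θ (∑' n, g n)‖, fun n => ?_⟩
  have hloc : c0smul (φ n) (∑' m, g m) = c0smul (φ n) (g n) := by
    rw [c0smul_tsum _ hg,
      tsum_eq_single n fun m hm => c0smul_c0smul_eq_zero_of_disjoint (hdisj hm.symm) _]
  calc ‖θ (f n) (ω n)‖ = ‖θ (∑' m, g m) (ω n)‖ := by
        rw [hθ.apply_eq_of_c0smul_eq (hφω n) hloc, hθ.map_c0smul_apply (hφω n)]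
    _ ≤ ‖θ (∑' m, g m)‖ := norm_apply_le _ _

theorem IsC0ModuleMap.exists_isCompact_exceedSet_inter_subset [LocallyCompactSpace Ω] [T2Space Ω]
    [CompleteSpace X] (hθ : IsC0ModuleMap θ) {U : Set Ω} (hU : IsOpen U) :
    ∃ A, IsCompact A ∧ A ⊆ U ∧ ∃ C, exceedSet θ C ∩ U ⊆ A := by
  by_contra! h
  obtain ⟨M, hdisj, hM⟩ := exists_pairwise_disjoint_isCompact_seq (U := U)
    (fun n M => ∃ (φ : C₀(Ω, ℂ)) (f : C₀(Ω, X)) (ω : Ω), support φ ⊆ M ∧ φ ω = 1 ∧ ‖φ‖ ≤ 1 ∧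
      ‖f‖ ≤ (1 / 2) ^ n ∧ (n : ℝ) < ‖θ f ω‖)
    fun n A hA hAU => by
      obtain ⟨ω, ⟨hωC, hωU⟩, hωA⟩ := not_subset.1 (h A hA hAU (2 ^ n * n))
      obtain ⟨φ, K, hK, hKW, hφK, hφω, hφ⟩ := exists_c0_bump (hU.sdiff hA.isClosed) ⟨hωU, hωA⟩
      obtain ⟨f, hf, hθf⟩ :=
        exists_norm_le_of_mem_exceedSet θ (ε := (1 / 2) ^ n) (by positivity) hωC
      refine ⟨K, hK, hKW, φ, f, ω, hφK, hφω, hφ, hf, ?_⟩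
      rwa [← mul_assoc, ← mul_pow, one_div_mul_cancel two_ne_zero, one_pow, one_mul] at hθf
  choose φ f ω hφM hφω hφ hf hθf using hM
  obtain ⟨B, hB⟩ := hθ.exists_bound_of_pairwise_disjoint
    (fun m n hmn => (hdisj hmn).mono (hφM m) (hφM n)) hφω hφ hf
  obtain ⟨n, hn⟩ := exists_nat_gt B
  exact (hθf n).not_ge ((hB n).trans hn.le)

end ModuleMap

theorem stmt_7_general
    {Ω : Type*} [TopologicalSpace Ω] [LocallyCompactSpace Ω] [T2Space Ω]
    (hni : ∀ ω : Ω, (𝓝[≠] ω).NeBot)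
    {X Y : Type*} [NormedAddCommGroup X] [NormedSpace ℂ X] [CompleteSpace X]
    [NormedAddCommGroup Y] [NormedSpace ℂ Y]
    (θ : C₀(Ω, X) →ₗ[ℂ] C₀(Ω, Y))
    (hmod : ∀ (f : C₀(Ω, X)) (φ : C₀(Ω, ℂ)), θ (c0smul φ f) = c0smul φ (θ f)) :
    ∃ C : ℝ, ∀ f : C₀(Ω, X), ‖θ f‖ ≤ C * ‖f‖ := by
  by_contra! hunbdd
  have hθ : IsC0ModuleMap θ := hmod
  obtain ⟨A₀, hA₀, -, C₀, hC₀⟩ := hθ.exists_isCompact_exceedSet_inter_subset isOpen_univ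
  obtain ⟨ω, hω⟩ := exists_forall_mem_closure_of_antitone (exceedSet_antitone θ)
    (exceedSet_nonempty θ hunbdd) hA₀ (by simpa using hC₀)
  obtain ⟨A, hA, hAω, C, hC⟩ :=
    hθ.exists_isCompact_exceedSet_inter_subset (isOpen_compl_singleton (x := ω))
  have := hni ω
  have hωA : ω ∈ A := hA.isClosed.closure_subset_iff.2 hC
    (mem_closure_diff_singleton_of_isOpen (isOpen_exceedSet θ C) (hω C))
  exact hAω hωA rfl

theorem stmt_7
    {Ω : Type*} [TopologicalSpace Ω] [LocallyCompactSpace Ω] [T2Space Ω]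
    (hni : ∀ ω : Ω, (𝓝[≠] ω).NeBot)
    {X Y : Type*} [NormedAddCommGroup X] [NormedSpace ℂ X] [CompleteSpace X]
    [NormedAddCommGroup Y] [NormedSpace ℂ Y] [CompleteSpace Y]
    (θ : C₀(Ω, X) →ₗ[ℂ] C₀(Ω, Y))
    (hmod : ∀ (f : C₀(Ω, X)) (φ : C₀(Ω, ℂ)), θ (c0smul φ f) = c0smul φ (θ f)) :
    ∃ C : ℝ, ∀ f : C₀(Ω, X), ‖θ f‖ ≤ C * ‖f‖ :=
  stmt_7_general hni θ hmod
end

section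
/- Let Ω and Δ be locally compact Hausdorff spaces, X and Y Banach spaces, and θ : C₀(Ω,X) → C₀(Δ,Y) a ℂ-linear map which is separating, meaning that whenever f, g ∈ C₀(Ω,X) satisfy ‖f(ω)‖·‖g(ω)‖ = 0 for all ω ∈ Ω, then ‖θ(f)(ν)‖·‖θ(g)(ν)‖ = 0 for all ν ∈ Δ. Let Δ_θ = { ν ∈ Δ : θ(f)(ν) ≠ 0 for some f }. Then there exists a continuous map σ : Δ_θ → Ω ∪ {∞} (the one-point compactification of Ω) such that for every ν ∈ Δ_θ and every f ∈ C₀(Ω,X) vanishing on a neighbourhood of σ(ν) (in Ω ∪ {∞}), we have θ(f)(ν) = 0. -/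
open ZeroAtInfty Filter Topology

theorem stmt_15
    {Ω Δ : Type*} [TopologicalSpace Ω] [LocallyCompactSpace Ω] [T2Space Ω]
    [TopologicalSpace Δ] [LocallyCompactSpace Δ] [T2Space Δ]
    {X Y : Type*} [NormedAddCommGroup X] [NormedSpace ℂ X] [CompleteSpace X]
    [NormedAddCommGroup Y] [NormedSpace ℂ Y] [CompleteSpace Y]
    (θ : C₀(Ω, X) →ₗ[ℂ] C₀(Δ, Y))
    (hsep : ∀ f g : C₀(Ω, X), (∀ ω : Ω, ‖f ω‖ * ‖g ω‖ = 0) →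
      ∀ ν : Δ, ‖θ f ν‖ * ‖θ g ν‖ = 0) :
    ∃ σ : {ν : Δ // ∃ f : C₀(Ω, X), θ f ν ≠ 0} → OnePoint Ω,
      Continuous σ ∧
      ∀ (ν : {ν : Δ // ∃ f : C₀(Ω, X), θ f ν ≠ 0}) (f : C₀(Ω, X)),
        (∃ U : Set (OnePoint Ω), IsOpen U ∧ σ ν ∈ U ∧
          ∀ ω : Ω, (ω : OnePoint Ω) ∈ U → f ω = 0) →
        θ f ν = 0 := by
  classical
  set Dθ := {ν : Δ // ∃ f : C₀(Ω, X), θ f ν ≠ 0} with hDθ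
  -- the "support point" property
  let P : OnePoint Ω → Δ → Prop := fun t ν =>
    ∀ U : Set (OnePoint Ω), IsOpen U → t ∈ U →
      ∃ g : C₀(Ω, X), (∀ ω : Ω, (ω : OnePoint Ω) ∉ U → g ω = 0) ∧ θ g ν ≠ 0
  -- existence of a support point
  have hex : ∀ ν : Dθ, ∃ t, P t ν.1 := by
    rintro ⟨ν, f₀, hf₀⟩
    by_contra h
    simp only [P] at h
    push_neg at h
    choose U hUopen hUmem hUg using h
    obtain ⟨s, hs⟩ := isCompact_univ.elim_finite_subcover U hUopen
      (fun t _ => Set.mem_iUnion.2 ⟨t, hUmem t⟩)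
    obtain ⟨φ, hφ⟩ := PartitionOfUnity.exists_isSubordinate
      (isClosed_univ : IsClosed (Set.univ : Set (OnePoint Ω)))
      (fun i : s => U i) (fun i => hUopen i)
      (by
        intro x _
        obtain ⟨i, hi, hx⟩ := Set.mem_iUnion₂.1 (hs (Set.mem_univ x))
        exact Set.mem_iUnion.2 ⟨⟨i, hi⟩, hx⟩)
    -- the pieces φ i • f₀
    have hg : ∀ i : s, ∃ g : C₀(Ω, X),
        (∀ ω : Ω, g ω = φ i ω • f₀ ω) := by
      intro i
      refine ⟨⟨⟨fun ω => φ i (ω : OnePoint Ω) • f₀ ω,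
        (((φ i).continuous.comp OnePoint.continuous_coe)).smul f₀.continuous⟩, ?_⟩,
        fun ω => rfl⟩
      · show Tendsto (fun ω : Ω => φ i (ω : OnePoint Ω) • f₀ ω) (cocompact Ω) (𝓝 0)
        rw [tendsto_zero_iff_norm_tendsto_zero]
        have hb : ∀ ω : Ω, ‖φ i (ω : OnePoint Ω) • f₀ ω‖ ≤ ‖f₀ ω‖ := by
          intro ω
          rw [norm_smul]
          calc ‖φ i (ω : OnePoint Ω)‖ * ‖f₀ ω‖
              ≤ 1 * ‖f₀ ω‖ := by
                apply mul_le_mul_of_nonneg_right _ (norm_nonneg _)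
                rw [Real.norm_eq_abs, abs_le]
                exact ⟨by linarith [φ.nonneg i (ω : OnePoint Ω)], φ.le_one i _⟩
            _ = ‖f₀ ω‖ := one_mul _
        have h0 : Tendsto (fun ω : Ω => ‖f₀ ω‖) (cocompact Ω) (𝓝 0) := by
          have := f₀.zero_at_infty'
          simpa using this.norm
        exact squeeze_zero (fun ω => norm_nonneg _) hb h0
    choose g hgval using hg
    -- f₀ = ∑ g i
    have hsum : f₀ = ∑ i : s, g i := by
      ext ω
      have hcoe : (∑ i : s, g i) ω = ∑ i : s, g i ω :=
        map_sum (⟨⟨fun h : C₀(Ω, X) => h ω, rfl⟩, fun a b => rfl⟩ : C₀(Ω, X) →+ X) g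
          Finset.univ
      rw [hcoe]
      have h1 : ∑ i : s, φ i (ω : OnePoint Ω) = 1 := by
        rw [← finsum_eq_sum_of_fintype]
        exact φ.sum_eq_one (Set.mem_univ _)
      calc f₀ ω = (1 : ℝ) • f₀ ω := (one_smul ℝ _).symm
        _ = (∑ i : s, φ i (ω : OnePoint Ω)) • f₀ ω := by rw [h1]
        _ = ∑ i : s, φ i (ω : OnePoint Ω) • f₀ ω := Finset.sum_smul
        _ = ∑ i : s, g i ω := by
            refine Finset.sum_congr rfl fun i _ => ?_
            rw [hgval i ω]
    -- each piece maps to zero at ν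
    have hzero : ∀ i : s, θ (g i) ν = 0 := by
      intro i
      apply hUg i
      intro ω hω
      rw [hgval i ω]
      have : φ i (ω : OnePoint Ω) = 0 := by
        have := hφ i
        exact image_eq_zero_of_notMem_tsupport (fun hmem => hω (this hmem))
      rw [this, zero_smul]
    apply hf₀
    rw [hsum, map_sum]
    have : (∑ i : s, θ (g i)) ν = ∑ i : s, θ (g i) ν :=
      map_sum (⟨⟨fun h : C₀(Δ, Y) => h ν, rfl⟩, fun a b => rfl⟩ : C₀(Δ, Y) →+ Y)
        (fun i => θ (g i)) Finset.univ
    rw [this]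
    exact Finset.sum_eq_zero fun i _ => hzero i
  -- define σ
  let σ : Dθ → OnePoint Ω := fun ν => (hex ν).choose
  have hP : ∀ ν : Dθ, P (σ ν) ν.1 := fun ν => (hex ν).choose_spec
  -- the support property
  have hsupp : ∀ (ν : Dθ) (f : C₀(Ω, X)) (U : Set (OnePoint Ω)), IsOpen U → σ ν ∈ U →
      (∀ ω : Ω, (ω : OnePoint Ω) ∈ U → f ω = 0) → θ f ν.1 = 0 := by
    intro ν f U hU hmem hvan
    obtain ⟨g, hg, hθg⟩ := hP ν U hU hmem
    have := hsep f g (fun ω => by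
      by_cases hω : (ω : OnePoint Ω) ∈ U
      · rw [hvan ω hω, norm_zero, zero_mul]
      · rw [hg ω hω, norm_zero, mul_zero]) ν.1
    rcases mul_eq_zero.1 this with h | h
    · exact norm_eq_zero.1 h
    · exact absurd (norm_eq_zero.1 h) hθg
  -- continuity
  have hcont : Continuous σ := by
    rw [continuous_iff_continuousAt]
    intro ν
    rw [ContinuousAt, tendsto_nhds]
    intro U hU hmem
    obtain ⟨V, hV, hmemV, hclV⟩ := normal_exists_closure_subset
      (isClosed_singleton (x := σ ν)) hU (Set.singleton_subset_iff.2 hmem)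
    obtain ⟨g, hg, hθg⟩ := hP ν V hV (hmemV rfl)
    have hWopen : IsOpen {ν' : Dθ | θ g ν'.1 ≠ 0} := by
      have : Continuous fun ν' : Dθ => θ g ν'.1 :=
        (θ g).continuous.comp continuous_subtype_val
      exact isOpen_compl_singleton.preimage this
    refine Filter.mem_of_superset (hWopen.mem_nhds hθg) ?_
    intro ν' hν'
    have hin : σ ν' ∈ closure V := by
      by_contra hout
      exact hν' (hsupp ν' g (closure V)ᶜ (isClosed_closure.isOpen_compl) hout
        (fun ω hω => hg ω fun hmem' => hω (subset_closure hmem')))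
    exact hclV hin
  exact ⟨σ, hcont, fun ν f ⟨U, hU, hmem, hvan⟩ => hsupp ν f U hU hmem hvan⟩
end

section
/- Let Ω and Δ be locally compact Hausdorff spaces and θ : C₀(Ω) → C₀(Δ) a ℂ-linear map (not assumed bounded) which is separating (f·g = 0 implies θ(f)·θ(g) = 0). Then the set 𝔘_θ = { ν ∈ Δ : sup_{‖f‖ ≤ 1} |θ(f)(ν)| = ∞ } has the property that sup { |θ(f)(ν)| : ν ∈ Δ \ 𝔘_θ, ‖f‖ ≤ 1 } < ∞. -/
open ZeroAtInfty

theorem stmt_16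
    {Ω Δ : Type*} [TopologicalSpace Ω] [LocallyCompactSpace Ω] [T2Space Ω]
    [TopologicalSpace Δ] [LocallyCompactSpace Δ] [T2Space Δ]
    (θ : C₀(Ω, ℂ) →ₗ[ℂ] C₀(Δ, ℂ))
    (hsep : ∀ f g : C₀(Ω, ℂ), f * g = 0 → θ f * θ g = 0) :
    ∃ C : ℝ, ∀ ν : Δ,
      ν ∉ {ν' : Δ | ¬ ∃ M : ℝ, ∀ f : C₀(Ω, ℂ), ‖f‖ ≤ 1 → ‖θ f ν'‖ ≤ M} →
      ∀ f : C₀(Ω, ℂ), ‖f‖ ≤ 1 → ‖θ f ν‖ ≤ C := by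
  classical
  -- The set of "bounded" points, as a subtype.
  set B := {ν : Δ // ∃ M : ℝ, ∀ f : C₀(Ω, ℂ), ‖f‖ ≤ 1 → ‖θ f ν‖ ≤ M} with hB
  -- Evaluation at ν composed with θ, as a linear functional.
  let L : Δ → (C₀(Ω, ℂ) →ₗ[ℂ] ℂ) := fun ν =>
    { toFun := fun f => θ f ν
      map_add' := fun f g => by simp
      map_smul' := fun c f => by simp }
  -- For ν ∈ B this functional is bounded, hence continuous.
  have hbound : ∀ ν : B, ∃ C : ℝ, ∀ f : C₀(Ω, ℂ), ‖L ν.1 f‖ ≤ C * ‖f‖ := by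
    rintro ⟨ν, M, hM⟩
    refine ⟨M / 1, fun f => ?_⟩
    exact (L ν).bound_of_ball_bound' one_pos M
      (fun g hg => hM g (by simpa using Metric.mem_closedBall.mp hg)) f
  let T : B → (C₀(Ω, ℂ) →L[ℂ] ℂ) := fun ν => (L ν.1).mkContinuousOfExistsBound (hbound ν)
  -- Pointwise boundedness: for fixed f, evaluations are bounded by ‖θ f‖.
  have hpt : ∀ f : C₀(Ω, ℂ), ∃ C : ℝ, ∀ ν : B, ‖T ν f‖ ≤ C := by
    intro f
    refine ⟨‖θ f‖, fun ν => ?_⟩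
    have : T ν f = θ f ν.1 := rfl
    rw [this]
    exact ((θ f).toBCF.norm_coe_le_norm ν.1).trans (by
      rw [ZeroAtInftyContinuousMap.norm_toBCF_eq_norm])
  -- Banach–Steinhaus.
  obtain ⟨C', hC'⟩ := banach_steinhaus hpt
  refine ⟨C', fun ν hν f hf => ?_⟩
  simp only [Set.mem_setOf_eq, not_not] at hν
  have := (T ⟨ν, hν⟩).le_opNorm f
  calc ‖θ f ν‖ = ‖T ⟨ν, hν⟩ f‖ := rfl
    _ ≤ ‖T ⟨ν, hν⟩‖ * ‖f‖ := (T ⟨ν, hν⟩).le_opNorm f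
    _ ≤ C' * 1 := by
        apply mul_le_mul (hC' _) hf (norm_nonneg f)
        exact (norm_nonneg _).trans (hC' ⟨ν, hν⟩)
    _ = C' := mul_one C'
end

section
/- Let Ω be a compact Hausdorff space and T : C(Ω) → C(Ω) a bounded ℂ-linear map such that for all f, g ∈ C(Ω), f·g = 0 implies T(f)·g = 0. Then T(f·φ) = T(f)·φ for all f, φ ∈ C(Ω); consequently T(f) = T(1)·f for every f, i.e., T is multiplication by T(1). -/
open Set

/-- If `f` vanishes on a neighborhood of `x`, then `T f x = 0` for a local operator. -/
lemma aux_vanish_nbhd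
    {Ω : Type*} [TopologicalSpace Ω] [CompactSpace Ω] [T2Space Ω]
    (T : C(Ω, ℂ) →L[ℂ] C(Ω, ℂ))
    (hloc : ∀ f g : C(Ω, ℂ), f * g = 0 → T f * g = 0)
    (f : C(Ω, ℂ)) {x : Ω} {U : Set Ω} (hU : IsOpen U) (hx : x ∈ U)
    (hf : ∀ y ∈ U, f y = 0) : T f x = 0 := by
  obtain ⟨g, hg0, hg1, -⟩ := exists_continuous_zero_one_of_isClosed
    (isClosed_compl_iff.mpr hU) (isClosed_singleton (x := x))
    (disjoint_singleton_right.mpr (not_not_intro hx))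
  set gc : C(Ω, ℂ) := ⟨fun y => (g y : ℂ), by fun_prop⟩ with hgc
  have hmul : f * gc = 0 := by
    ext y
    by_cases hy : y ∈ U
    · simp [gc, hf y hy]
    · have : g y = 0 := hg0 hy
      simp [gc, this]
  have := congrFun (congrArg (fun h : C(Ω, ℂ) => (h : Ω → ℂ)) (hloc f gc hmul)) x
  have hgx : g x = 1 := hg1 rfl
  simpa [gc, hgx] using this

/-- Key lemma: if `ψ x = 0`, then `T (f * ψ) x = 0`. -/
lemma aux_key
    {Ω : Type*} [TopologicalSpace Ω] [CompactSpace Ω] [T2Space Ω]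
    (T : C(Ω, ℂ) →L[ℂ] C(Ω, ℂ))
    (hloc : ∀ f g : C(Ω, ℂ), f * g = 0 → T f * g = 0)
    (f ψ : C(Ω, ℂ)) {x : Ω} (hψ : ψ x = 0) : T (f * ψ) x = 0 := by
  rw [← norm_le_zero_iff]
  have hbound : ∀ ε > (0:ℝ), ‖T (f * ψ) x‖ ≤ ‖T‖ * ‖f‖ * ε := by
    intro ε hε
    set W : Set Ω := {y | ‖ψ y‖ < ε} with hW
    have hWopen : IsOpen W := isOpen_lt (by fun_prop) continuous_const
    have hxW : x ∈ W := by simp [W, hψ, hε]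
    obtain ⟨K, hKnhds, hKclosed, hKW⟩ :=
      exists_mem_nhds_isClosed_subset (hWopen.mem_nhds hxW)
    obtain ⟨χ, hχ0, hχ1, hχmem⟩ := exists_continuous_zero_one_of_isClosed
      (isClosed_compl_iff.mpr hWopen) hKclosed
      (disjoint_left.mpr fun y hy hyK => hy (hKW hyK))
    set χc : C(Ω, ℂ) := ⟨fun y => (χ y : ℂ), by fun_prop⟩ with hχc
    have hsplit : f * ψ = f * ψ * (1 - χc) + f * ψ * χc := by ring
    -- first piece vanishes near x
    have h1 : T (f * ψ * (1 - χc)) x = 0 := by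
      apply aux_vanish_nbhd T hloc _ isOpen_interior (mem_interior_iff_mem_nhds.mpr hKnhds)
      intro y hy
      have : χ y = 1 := hχ1 (interior_subset hy)
      simp [χc, this]
    -- second piece is small
    have hnorm : ‖f * ψ * χc‖ ≤ ‖f‖ * ε := by
      apply ContinuousMap.norm_le _ (by positivity) |>.mpr
      intro y
      have hfy : ‖f y‖ ≤ ‖f‖ := (f).norm_coe_le_norm y
      have hψχ : ‖ψ y * (χ y : ℂ)‖ ≤ ε := by
        by_cases hy : y ∈ W
        · have h1 : ‖ψ y‖ < ε := hy
          have h2 : ‖(χ y : ℂ)‖ ≤ 1 := by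
            simpa [Complex.norm_real, Real.norm_eq_abs,
              abs_of_nonneg (hχmem y).1] using (hχmem y).2
          calc ‖ψ y * (χ y : ℂ)‖ = ‖ψ y‖ * ‖(χ y : ℂ)‖ := norm_mul _ _
            _ ≤ ε * 1 := mul_le_mul h1.le h2 (norm_nonneg _) hε.le
            _ = ε := mul_one ε
        · have : χ y = 0 := hχ0 hy
          simp [this, hε.le]
      calc ‖(f * ψ * χc) y‖ = ‖f y‖ * ‖ψ y * (χ y : ℂ)‖ := by
            simp [χc, mul_assoc, norm_mul]
        _ ≤ ‖f‖ * ε := mul_le_mul hfy hψχ (norm_nonneg _) (norm_nonneg _)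
    have h2 : ‖T (f * ψ * χc) x‖ ≤ ‖T‖ * ‖f‖ * ε := by
      calc ‖T (f * ψ * χc) x‖ ≤ ‖T (f * ψ * χc)‖ :=
            (T (f * ψ * χc)).norm_coe_le_norm x
        _ ≤ ‖T‖ * ‖f * ψ * χc‖ := T.le_opNorm _
        _ ≤ ‖T‖ * (‖f‖ * ε) := by
            exact mul_le_mul_of_nonneg_left hnorm (norm_nonneg T)
        _ = ‖T‖ * ‖f‖ * ε := by ring
    have hTsplit : T (f * ψ) x = T (f * ψ * (1 - χc)) x + T (f * ψ * χc) x := by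
      rw [← ContinuousMap.add_apply, ← map_add, ← hsplit]
    rw [hTsplit, h1, zero_add]
    exact h2
  by_contra h
  push_neg at h
  have hpos : 0 < ‖T (f * ψ) x‖ := h
  set C := ‖T‖ * ‖f‖ with hC
  have hCnn : 0 ≤ C := by positivity
  have := hbound (‖T (f * ψ) x‖ / (2 * (C + 1))) (by positivity)
  have hlt : C * (‖T (f * ψ) x‖ / (2 * (C + 1))) < ‖T (f * ψ) x‖ := by
    rw [div_eq_inv_mul, ← mul_assoc]
    have : C * (2 * (C + 1))⁻¹ < 1 := by
      rw [mul_inv_lt_iff₀ (by positivity), one_mul]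
      nlinarith
    nlinarith
  linarith

theorem stmt_17
    {Ω : Type*} [TopologicalSpace Ω] [CompactSpace Ω] [T2Space Ω]
    (T : C(Ω, ℂ) →L[ℂ] C(Ω, ℂ))
    (hloc : ∀ f g : C(Ω, ℂ), f * g = 0 → T f * g = 0) :
    (∀ f φ : C(Ω, ℂ), T (f * φ) = T f * φ) ∧
      ∀ f : C(Ω, ℂ), T f = T 1 * f := by
  have main : ∀ f φ : C(Ω, ℂ), T (f * φ) = T f * φ := by
    intro f φ
    ext x
    have hdecomp : f * φ = f * (φ - φ x • 1) + φ x • f := by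
      simp [mul_sub, smul_eq_mul]
    have hkey : T (f * (φ - φ x • (1:C(Ω,ℂ)))) x = 0 :=
      aux_key T hloc f _ (by simp)
    have hT : T (f * φ) x = T (f * (φ - φ x • 1)) x + (φ x • T f) x := by
      rw [← ContinuousMap.add_apply, ← map_smul, ← map_add, ← hdecomp]
    rw [ContinuousMap.mul_apply, hT, hkey, zero_add]
    simp [smul_eq_mul, mul_comm]
  refine ⟨main, fun f => ?_⟩
  have := main 1 f
  simpa using this
end
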